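/- Series–Marcum Q identity used in the SIC proof: for K ≥ 0, Ω > 0, γ ≥ 0 and x ≥ 0, Q₁(√(2K), √(2(K+1)γ(1+x)/Ω)) = 1 − Σ_{n≥0} α(n,Ω,K,γ)(1+x)^{n+1}, where α(n,Ω,K,γ) = (-1)^n e^{-K}(L_n(K)/(1+n)!)((1+K)γ/Ω)^{n+1}, with the series convergent. -/

import Mathlib

open MeasureTheory ProbabilityTheory Real Filter Finset

/-- Modified Bessel function of the first kind, order zero. -/
noncomputable def besselI0 (z : ℝ) : ℝ :=
  ∑' m : ℕ, (z / 2) ^ (2 * m) / ((Nat.factorial m : ℝ)) ^ 2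

/-- Density of the Rician power (scaled noncentral chi-squared) distribution with
Rician factor `K` and average power `Om`. -/
noncomputable def ricianPdf (K Om x : ℝ) : ℝ :=
  if 0 ≤ x then ((K + 1) / Om) * Real.exp (-K - (K + 1) * x / Om) *
    besselI0 (2 * Real.sqrt (K * (K + 1) * x / Om)) else 0

/-- Laguerre polynomial of degree `n` (order zero). -/
noncomputable def laguerreP (n : ℕ) (x : ℝ) : ℝ :=
  ∑ k ∈ Finset.range (n + 1), (-1 : ℝ) ^ k * (n.choose k : ℝ) * x ^ k / (Nat.factorial k : ℝ)

/-- The coefficient `α(q, Ω, K, γ)` in the Rician power CDF expansion. -/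
noncomputable def alphaCoef (q : ℕ) (Om K γ : ℝ) : ℝ :=
  (-1 : ℝ) ^ q * Real.exp (-K) * (laguerreP q K / (Nat.factorial (q + 1) : ℝ)) *
    ((1 + K) * γ / Om) ^ (q + 1)

/-- First-order Marcum Q-function. -/
noncomputable def marcumQ1 (a b : ℝ) : ℝ :=
  ∫ t in Set.Ioi b, t * Real.exp (-(t ^ 2 + a ^ 2) / 2) * besselI0 (a * t)

/-- The confluent hypergeometric value `₁F₁(-l, 1; -K)` for nonnegative integer `l`. -/
noncomputable def hyp1F1 (l : ℕ) (K : ℝ) : ℝ :=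
  ∑ j ∈ Finset.range (l + 1), (l.choose j : ℝ) * K ^ j / (Nat.factorial j : ℝ)

/-! ### Auxiliary lemmas -/

lemma besselI0_term_nonneg (z : ℝ) (m : ℕ) :
    0 ≤ (z / 2) ^ (2 * m) / ((Nat.factorial m : ℝ)) ^ 2 := by
  apply div_nonneg _ (by positivity)
  rw [pow_mul]; positivity

lemma besselI0_term_le (z : ℝ) (m : ℕ) :
    (z / 2) ^ (2 * m) / ((Nat.factorial m : ℝ)) ^ 2 ≤ (z ^ 2 / 4) ^ m / (Nat.factorial m : ℝ) := by
  rw [pow_mul, show (z / 2) ^ 2 = z ^ 2 / 4 by ring]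
  have h1 : (1:ℝ) ≤ (Nat.factorial m : ℝ) := by
    exact_mod_cast Nat.one_le_iff_ne_zero.mpr m.factorial_ne_zero
  have h2 : (Nat.factorial m : ℝ) ≤ ((Nat.factorial m : ℝ)) ^ 2 := by nlinarith
  apply div_le_div_of_nonneg_left _ (by linarith) h2
  positivity

lemma besselI0_summable (z : ℝ) :
    Summable fun m : ℕ => (z / 2) ^ (2 * m) / ((Nat.factorial m : ℝ)) ^ 2 :=
  Summable.of_nonneg_of_le (besselI0_term_nonneg z) (besselI0_term_le z)
    (Real.summable_pow_div_factorial _)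

lemma besselI0_nonneg (z : ℝ) : 0 ≤ besselI0 z :=
  tsum_nonneg (besselI0_term_nonneg z)

lemma fact_two_mul_le (m : ℕ) : Nat.factorial (2 * m) ≤ 4 ^ m * (Nat.factorial m) ^ 2 := by
  induction m with
  | zero => simp
  | succ n ih =>
    have h : 2 * (n + 1) = 2 * n + 1 + 1 := by ring
    rw [h, Nat.factorial_succ, Nat.factorial_succ]
    calc (2 * n + 1 + 1) * ((2 * n + 1) * Nat.factorial (2 * n))
        ≤ (2 * n + 2) * ((2 * n + 2) * Nat.factorial (2 * n)) := by
          apply Nat.mul_le_mul_left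
          apply Nat.mul_le_mul_right
          omega
      _ ≤ (2 * n + 2) * ((2 * n + 2) * (4 ^ n * (Nat.factorial n) ^ 2)) := by
          apply Nat.mul_le_mul_left
          exact Nat.mul_le_mul_left _ ih
      _ = 4 ^ (n + 1) * ((n + 1) * Nat.factorial n) ^ 2 := by ring

lemma exp_eq_tsum_real (x : ℝ) : Real.exp x = ∑' n : ℕ, x ^ n / (Nat.factorial n : ℝ) := by
  rw [Real.exp_eq_exp_ℝ, NormedSpace.exp_eq_tsum_div]

lemma besselI0_le_exp (z : ℝ) : besselI0 z ≤ Real.exp |z| := by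
  rw [exp_eq_tsum_real]
  apply Summable.tsum_le_tsum_of_inj (fun m => 2 * m) (fun a b h => by simpa using h)
  · intro n _
    positivity
  · intro m
    have h4 : (z / 2) ^ (2 * m) = |z| ^ (2 * m) / 4 ^ m := by
      rw [div_pow, (even_two_mul m).pow_abs, pow_mul, pow_mul, show ((2:ℝ))^2 = 4 by norm_num]
    rw [h4, div_div]
    have hle : ((Nat.factorial (2 * m) : ℝ)) ≤ 4 ^ m * (Nat.factorial m : ℝ) ^ 2 := by
      exact_mod_cast fact_two_mul_le m
    exact div_le_div_of_nonneg_left (by positivity) (by positivity) hle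
  · exact besselI0_summable z
  · exact Real.summable_pow_div_factorial _

lemma besselI0_measurable : Measurable besselI0 := by
  apply measurable_of_tendsto_metrizable
    (f := fun N z => ∑ m ∈ Finset.range N, (z / 2) ^ (2 * m) / ((Nat.factorial m : ℝ)) ^ 2)
  · intro N
    apply Finset.measurable_sum
    intro m _
    fun_prop
  · rw [tendsto_pi_nhds]
    intro z
    exact (besselI0_summable z).hasSum.tendsto_sum_nat

lemma besselI0_two_sqrt (w : ℝ) (hw : 0 ≤ w) :
    besselI0 (2 * Real.sqrt w) = ∑' m : ℕ, w ^ m / ((Nat.factorial m : ℝ)) ^ 2 := by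
  unfold besselI0
  congr 1
  funext m
  rw [mul_div_cancel_left₀ _ (two_ne_zero), pow_mul, Real.sq_sqrt hw]

lemma rpow_aux (m : ℕ) (x : ℝ) (hx : x ∈ Set.Ioi (0:ℝ)) :
    Real.exp (-x) * x ^ ((m : ℝ) + 1 - 1) = x ^ m * Real.exp (-x) := by
  rw [add_sub_cancel_right, Real.rpow_natCast, mul_comm]

lemma integral_pow_mul_exp_neg (m : ℕ) :
    ∫ x in Set.Ioi (0:ℝ), x ^ m * Real.exp (-x) = (Nat.factorial m : ℝ) := by
  have h := Real.Gamma_eq_integral (s := (m : ℝ) + 1) (by positivity)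
  rw [Real.Gamma_nat_eq_factorial] at h
  rw [h]
  exact setIntegral_congr_fun measurableSet_Ioi (fun x hx => (rpow_aux m x hx).symm)

lemma integrable_pow_mul_exp_neg (m : ℕ) :
    IntegrableOn (fun x => x ^ m * Real.exp (-x)) (Set.Ioi (0:ℝ)) := by
  have h := Real.GammaIntegral_convergent (s := (m : ℝ) + 1) (by positivity)
  exact (h.congr_fun (rpow_aux m) measurableSet_Ioi)

lemma sqrt_image (y : ℝ) (hy : 0 ≤ y) :
    (fun s => Real.sqrt (2 * s)) '' (Set.Ioi y) = Set.Ioi (Real.sqrt (2 * y)) := by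
  ext t
  constructor
  · rintro ⟨s, hs, rfl⟩
    rw [Set.mem_Ioi] at hs ⊢
    exact Real.sqrt_lt_sqrt (by linarith) (by linarith)
  · intro ht
    rw [Set.mem_Ioi] at ht
    have h0 : 0 ≤ Real.sqrt (2 * y) := Real.sqrt_nonneg _
    have htpos : 0 < t := lt_of_le_of_lt h0 ht
    refine ⟨t ^ 2 / 2, ?_, ?_⟩
    · rw [Set.mem_Ioi]
      have h1 : Real.sqrt (2 * y) ^ 2 < t ^ 2 := by
        apply pow_lt_pow_left₀ ht h0
        norm_num
      rw [Real.sq_sqrt (by linarith)] at h1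
      linarith
    · show Real.sqrt (2 * (t ^ 2 / 2)) = t
      rw [show 2 * (t ^ 2 / 2) = t ^ 2 by ring]
      exact Real.sqrt_sq htpos.le

lemma marcum_change (K y : ℝ) (hK : 0 ≤ K) (hy : 0 ≤ y) :
    (∫ t in Set.Ioi (Real.sqrt (2 * y)),
      t * Real.exp (-(t ^ 2 + (Real.sqrt (2 * K)) ^ 2) / 2) * besselI0 (Real.sqrt (2 * K) * t))
    = ∫ s in Set.Ioi y, Real.exp (-K - s) * besselI0 (2 * Real.sqrt (K * s)) := by
  rw [← sqrt_image y hy]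
  rw [integral_image_eq_integral_abs_deriv_smul measurableSet_Ioi
    (f' := fun s => 1 / Real.sqrt (2 * s)) ?_ ?_]
  · apply setIntegral_congr_fun measurableSet_Ioi
    intro s hs
    rw [Set.mem_Ioi] at hs
    have hs0 : 0 < s := lt_of_le_of_lt hy hs
    have h2s : (0:ℝ) < 2 * s := by linarith
    have hss : Real.sqrt (2 * s) ^ 2 = 2 * s := Real.sq_sqrt h2s.le
    have hKK : Real.sqrt (2 * K) ^ 2 = 2 * K := Real.sq_sqrt (by linarith)
    have hprod : Real.sqrt (2 * K) * Real.sqrt (2 * s) = 2 * Real.sqrt (K * s) := by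
      rw [← Real.sqrt_mul (by linarith) (2 * s),
        show 2 * K * (2 * s) = 2 ^ 2 * (K * s) by ring,
        Real.sqrt_mul (by positivity) (K * s), Real.sqrt_sq (by norm_num)]
    have hsne : Real.sqrt (2 * s) ≠ 0 := by positivity
    show |1 / Real.sqrt (2 * s)| • (Real.sqrt (2 * s) *
        Real.exp (-(Real.sqrt (2 * s) ^ 2 + Real.sqrt (2 * K) ^ 2) / 2) *
        besselI0 (Real.sqrt (2 * K) * Real.sqrt (2 * s)))
      = Real.exp (-K - s) * besselI0 (2 * Real.sqrt (K * s))
    rw [smul_eq_mul, hss, hKK, hprod, abs_of_pos (by positivity),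
      show -(2 * s + 2 * K) / 2 = -K - s by ring]
    field_simp
  · intro x hx
    rw [Set.mem_Ioi] at hx
    have hx0 : 0 < x := lt_of_le_of_lt hy hx
    have h2x : (2:ℝ) * x ≠ 0 := by positivity
    have h1 : HasDerivAt (fun s : ℝ => Real.sqrt (2 * s)) (2 / (2 * Real.sqrt (2 * x))) x := by
      apply HasDerivAt.sqrt _ h2x
      simpa using (hasDerivAt_id x).const_mul (2:ℝ)
    have h2 : (2 : ℝ) / (2 * Real.sqrt (2 * x)) = 1 / Real.sqrt (2 * x) := by
      rw [div_eq_div_iff (by positivity) (by positivity)]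
      ring
    rw [h2] at h1
    exact h1.hasDerivWithinAt
  · intro a ha b hb hab
    rw [Set.mem_Ioi] at ha hb
    have h : (2:ℝ) * a = 2 * b :=
      (Real.sqrt_inj (by linarith) (by linarith)).mp hab
    linarith

/-- Coefficient of the Bessel series. -/
noncomputable def cc (K : ℝ) (m : ℕ) : ℝ :=
  Real.exp (-K) * K ^ m / ((Nat.factorial m : ℝ)) ^ 2

/-- Terms of the double series. -/
noncomputable def AA (K y : ℝ) (p : ℕ × ℕ) : ℝ :=
  cc K p.1 * ((-1 : ℝ) ^ p.2 / (Nat.factorial p.2 : ℝ)) *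
    (y ^ (p.1 + p.2 + 1) / ((p.1 + p.2 + 1 : ℕ) : ℝ))

/-- Coefficient of the single series in `y`. -/
noncomputable def coefc (K y : ℝ) (n : ℕ) : ℝ :=
  (-1 : ℝ) ^ n * Real.exp (-K) * (laguerreP n K / (Nat.factorial (n + 1) : ℝ)) * y ^ (n + 1)

lemma cc_nonneg {K : ℝ} (hK : 0 ≤ K) (m : ℕ) : 0 ≤ cc K m := by
  unfold cc; positivity

lemma sum_antidiagonal_AA (K y : ℝ) (n : ℕ) :
    ∑ p ∈ Finset.HasAntidiagonal.antidiagonal n, AA K y p = coefc K y n := by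
  rw [Finset.Nat.sum_antidiagonal_eq_sum_range_succ_mk]
  unfold coefc laguerreP
  rw [Finset.sum_div, Finset.mul_sum, Finset.sum_mul]
  apply Finset.sum_congr rfl
  intro k hk
  rw [Finset.mem_range] at hk
  have hkn : k ≤ n := Nat.lt_succ_iff.mp hk
  unfold AA cc
  have hsign : (-1 : ℝ) ^ (n - k) = (-1) ^ n * (-1) ^ k := by
    rw [← pow_add, show n + k = (n - k) + 2 * k by omega, pow_add, pow_mul]
    norm_num
  have hfact : ((n.choose k : ℝ)) * (Nat.factorial k : ℝ) * (Nat.factorial (n - k) : ℝ)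
      = (Nat.factorial n : ℝ) := by
    exact_mod_cast Nat.choose_mul_factorial_mul_factorial hkn
  have hnk : n - k + (k + (n - k) + 1) = n + 1 + (n - k) := by omega
  have hfs : (Nat.factorial (n + 1) : ℝ) = (n + 1 : ℕ) * (Nat.factorial n : ℝ) := by
    exact_mod_cast Nat.factorial_succ n
  have hy : y ^ (k + (n - k) + 1) = y ^ (n + 1) := by
    congr 1; omega
  have hq : ((k + (n - k) + 1 : ℕ) : ℝ) = ((n + 1 : ℕ) : ℝ) := by
    congr 1; omega
  rw [hy, hq, hsign]
  have hkf : ((Nat.factorial k : ℝ)) ≠ 0 := by positivity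
  have hnkf : ((Nat.factorial (n - k) : ℝ)) ≠ 0 := by positivity
  have hn1 : (((n + 1 : ℕ)) : ℝ) ≠ 0 := by positivity
  have hnf : ((Nat.factorial n : ℝ)) ≠ 0 := by positivity
  field_simp [hfs]
  linear_combination (-K ^ k * y ^ (n + 1) * ((n + 1 : ℕ) : ℝ)) * hfact + (K ^ k * y ^ (n + 1)) * hfs


lemma tsum_antidiagonal_reindex {f : ℕ × ℕ → ℝ} (hf : Summable f) :
    Summable (fun n : ℕ => ∑ p ∈ Finset.HasAntidiagonal.antidiagonal n, f p) ∧
    ∑' p : ℕ × ℕ, f p = ∑' n : ℕ, ∑ p ∈ Finset.HasAntidiagonal.antidiagonal n, f p := by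
  classical
  set e := Finset.HasAntidiagonal.sigmaAntidiagonalEquivProd (A := ℕ)
  have he : Summable fun x : (Σ n : ℕ, Finset.HasAntidiagonal.antidiagonal n) => f (e x) :=
    (Equiv.summable_iff e).mpr hf
  have inner : ∀ n : ℕ, ∑' c : (Finset.HasAntidiagonal.antidiagonal n : Finset (ℕ × ℕ)),
      f (e ⟨n, c⟩) = ∑ p ∈ Finset.HasAntidiagonal.antidiagonal n, f p := by
    intro n
    have : ∀ c : (Finset.HasAntidiagonal.antidiagonal n : Finset (ℕ × ℕ)), f (e ⟨n, c⟩) = f c := fun c => rfl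
    rw [tsum_congr this]
    exact Finset.tsum_subtype _ f
  constructor
  · have h1 := he.sigma
    simpa only [inner] using h1
  · rw [← Equiv.tsum_eq e f, Summable.tsum_sigma he]
    exact tsum_congr inner

lemma AA_le {K y : ℝ} (hK : 0 ≤ K) (hy : 0 ≤ y) (p : ℕ × ℕ) :
    |AA K y p| ≤ (Real.exp (-K) * y) * ((K * y) ^ p.1 / (Nat.factorial p.1 : ℝ)
      * (y ^ p.2 / (Nat.factorial p.2 : ℝ))) := by
  obtain ⟨m, j⟩ := p
  have habs : |AA K y (m, j)| = cc K m * (1 / (Nat.factorial j : ℝ)) *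
      (y ^ (m + j + 1) / ((m + j + 1 : ℕ) : ℝ)) := by
    unfold AA
    rw [abs_mul, abs_mul, abs_of_nonneg (cc_nonneg hK m), abs_div, abs_pow, abs_neg, abs_one,
      one_pow, Nat.abs_cast, abs_of_nonneg (by positivity)]
  rw [habs]
  have hA : cc K m ≤ Real.exp (-K) * K ^ m / (Nat.factorial m : ℝ) := by
    unfold cc
    have h1 : (1:ℝ) ≤ (Nat.factorial m : ℝ) := by
      exact_mod_cast Nat.one_le_iff_ne_zero.mpr m.factorial_ne_zero
    apply div_le_div_of_nonneg_left (by positivity) (by linarith) (by nlinarith)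
  have hB : y ^ (m + j + 1) / ((m + j + 1 : ℕ) : ℝ) ≤ y ^ (m + j + 1) := by
    apply div_le_self (by positivity)
    exact_mod_cast Nat.one_le_iff_ne_zero.mpr (by omega)
  calc cc K m * (1 / (Nat.factorial j : ℝ)) * (y ^ (m + j + 1) / ((m + j + 1 : ℕ) : ℝ))
      ≤ (Real.exp (-K) * K ^ m / (Nat.factorial m : ℝ)) * (1 / (Nat.factorial j : ℝ))
        * y ^ (m + j + 1) := by
        apply mul_le_mul (mul_le_mul_of_nonneg_right hA (by positivity)) hB (by positivity)
        positivity
    _ = (Real.exp (-K) * y) * ((K * y) ^ m / (Nat.factorial m : ℝ)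
        * (y ^ j / (Nat.factorial j : ℝ))) := by
        rw [pow_succ, pow_add, mul_pow]
        ring

lemma summable_bound {K y : ℝ} (hK : 0 ≤ K) (hy : 0 ≤ y) :
    Summable fun p : ℕ × ℕ => (Real.exp (-K) * y) * ((K * y) ^ p.1 / (Nat.factorial p.1 : ℝ)
      * (y ^ p.2 / (Nat.factorial p.2 : ℝ))) := by
  apply Summable.mul_left
  exact (Real.summable_pow_div_factorial (K * y)).mul_of_nonneg
    (Real.summable_pow_div_factorial y)
    (fun m => by have := mul_nonneg hK hy; positivity) (fun j => by positivity)

lemma AA_abs_summable {K y : ℝ} (hK : 0 ≤ K) (hy : 0 ≤ y) :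
    Summable fun p : ℕ × ℕ => |AA K y p| :=
  Summable.of_nonneg_of_le (fun p => abs_nonneg _) (AA_le hK hy) (summable_bound hK hy)

lemma AA_summable {K y : ℝ} (hK : 0 ≤ K) (hy : 0 ≤ y) : Summable (AA K y) :=
  summable_abs_iff.mp (AA_abs_summable hK hy)

lemma fact_one_le (m : ℕ) : (1:ℝ) ≤ (Nat.factorial m : ℝ) := by
  exact_mod_cast Nat.one_le_iff_ne_zero.mpr m.factorial_ne_zero

lemma cc_le {K : ℝ} (hK : 0 ≤ K) (m : ℕ) :
    cc K m ≤ Real.exp (-K) * K ^ m / (Nat.factorial m : ℝ) := by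
  unfold cc
  have h1 := fact_one_le m
  exact div_le_div_of_nonneg_left (by positivity) (by linarith) (by nlinarith)

/-- pointwise double-series expansion -/
lemma g_tsum {K : ℝ} (hK : 0 ≤ K) (s : ℝ) (hs : 0 ≤ s) :
    Real.exp (-K - s) * besselI0 (2 * Real.sqrt (K * s)) =
    ∑' p : ℕ × ℕ, cc K p.1 * ((-1 : ℝ) ^ p.2 / (Nat.factorial p.2 : ℝ)) * s ^ (p.1 + p.2) := by
  rw [besselI0_two_sqrt (K * s) (mul_nonneg hK hs),
    show -K - s = -K + -s by ring, Real.exp_add]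
  have h1 : Real.exp (-K) * ∑' m : ℕ, (K * s) ^ m / ((Nat.factorial m : ℝ)) ^ 2
      = ∑' m : ℕ, cc K m * s ^ m := by
    rw [← tsum_mul_left]
    congr 1
    funext m
    unfold cc
    rw [mul_pow]
    ring
  have h2 : Real.exp (-s) = ∑' j : ℕ, (-1 : ℝ) ^ j * s ^ j / (Nat.factorial j : ℝ) := by
    rw [exp_eq_tsum_real]
    congr 1
    funext j
    rw [neg_pow]
  have hn1 : Summable fun m : ℕ => ‖cc K m * s ^ m‖ := by
    apply Summable.of_nonneg_of_le (fun m => norm_nonneg _)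
      (f := fun m => Real.exp (-K) * ((K * s) ^ m / (Nat.factorial m : ℝ)))
    · intro m
      rw [Real.norm_of_nonneg (mul_nonneg (cc_nonneg hK m) (by positivity))]
      calc cc K m * s ^ m ≤ (Real.exp (-K) * K ^ m / (Nat.factorial m : ℝ)) * s ^ m :=
            mul_le_mul_of_nonneg_right (cc_le hK m) (by positivity)
        _ = Real.exp (-K) * ((K * s) ^ m / (Nat.factorial m : ℝ)) := by
            rw [mul_pow]; ring
    · exact (Real.summable_pow_div_factorial (K * s)).mul_left _
  have hn2 : Summable fun j : ℕ => ‖(-1 : ℝ) ^ j * s ^ j / (Nat.factorial j : ℝ)‖ := by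
    apply Summable.congr (Real.summable_pow_div_factorial s)
    intro j
    rw [norm_div, norm_mul, norm_pow, norm_neg, norm_one, one_pow, one_mul, norm_pow,
      Real.norm_of_nonneg hs, Real.norm_of_nonneg (by positivity)]
  have key : Real.exp (-K) * Real.exp (-s) * (∑' m : ℕ, (K * s) ^ m / ((Nat.factorial m : ℝ)) ^ 2)
      = (∑' m : ℕ, cc K m * s ^ m) *
        (∑' j : ℕ, (-1 : ℝ) ^ j * s ^ j / (Nat.factorial j : ℝ)) := by
    rw [← h2, ← h1]
    ring
  rw [key, tsum_mul_tsum_of_summable_norm hn1 hn2]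
  apply tsum_congr
  rintro ⟨m, j⟩
  rw [pow_add]
  ring

lemma integral_pow_Ioc (y : ℝ) (hy : 0 ≤ y) (q : ℕ) :
    ∫ s in Set.Ioc 0 y, s ^ q = y ^ (q + 1) / ((q + 1 : ℕ) : ℝ) := by
  rw [← intervalIntegral.integral_of_le hy, integral_pow]
  push_cast
  rw [zero_pow (by omega)]
  ring

lemma F_integral {K y : ℝ} (hy : 0 ≤ y) (p : ℕ × ℕ) :
    ∫ s in Set.Ioc 0 y,
      cc K p.1 * ((-1 : ℝ) ^ p.2 / (Nat.factorial p.2 : ℝ)) * s ^ (p.1 + p.2) = AA K y p := by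
  rw [MeasureTheory.integral_const_mul _ _, integral_pow_Ioc y hy]
  rfl

lemma F_norm_integral {K y : ℝ} (hK : 0 ≤ K) (hy : 0 ≤ y) (p : ℕ × ℕ) :
    ∫ s in Set.Ioc 0 y,
      ‖cc K p.1 * ((-1 : ℝ) ^ p.2 / (Nat.factorial p.2 : ℝ)) * s ^ (p.1 + p.2)‖
      = |AA K y p| := by
  have h1 : ∀ s ∈ Set.Ioc (0:ℝ) y,
      ‖cc K p.1 * ((-1 : ℝ) ^ p.2 / (Nat.factorial p.2 : ℝ)) * s ^ (p.1 + p.2)‖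
      = |cc K p.1 * ((-1 : ℝ) ^ p.2 / (Nat.factorial p.2 : ℝ))| * s ^ (p.1 + p.2) := by
    intro s hs
    rw [Real.norm_eq_abs, abs_mul, abs_pow, abs_of_nonneg hs.1.le]
  rw [setIntegral_congr_fun measurableSet_Ioc h1, MeasureTheory.integral_const_mul _ _, integral_pow_Ioc y hy]
  unfold AA
  rw [abs_mul, abs_mul,
    abs_of_nonneg (show (0:ℝ) ≤ y ^ (p.1 + p.2 + 1) / ((p.1 + p.2 + 1 : ℕ) : ℝ) by positivity),
    abs_mul]

lemma partial_integral {K y : ℝ} (hK : 0 ≤ K) (hy : 0 ≤ y) :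
    ∫ s in Set.Ioc 0 y, Real.exp (-K - s) * besselI0 (2 * Real.sqrt (K * s))
      = ∑' p : ℕ × ℕ, AA K y p := by
  have h1 : ∫ s in Set.Ioc 0 y, Real.exp (-K - s) * besselI0 (2 * Real.sqrt (K * s))
      = ∫ s in Set.Ioc 0 y, ∑' p : ℕ × ℕ,
          cc K p.1 * ((-1 : ℝ) ^ p.2 / (Nat.factorial p.2 : ℝ)) * s ^ (p.1 + p.2) :=
    setIntegral_congr_fun measurableSet_Ioc (fun s hs => g_tsum hK s hs.1.le)
  have hint : ∀ p : ℕ × ℕ, Integrable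
      (fun s => cc K p.1 * ((-1 : ℝ) ^ p.2 / (Nat.factorial p.2 : ℝ)) * s ^ (p.1 + p.2))
      (volume.restrict (Set.Ioc 0 y)) := by
    intro p
    apply Continuous.integrableOn_Ioc
    exact continuous_const.mul (continuous_pow _)
  have hsum : Summable fun p : ℕ × ℕ => ∫ s in Set.Ioc 0 y,
      ‖cc K p.1 * ((-1 : ℝ) ^ p.2 / (Nat.factorial p.2 : ℝ)) * s ^ (p.1 + p.2)‖ := by
    apply Summable.congr (AA_abs_summable hK hy)
    intro p
    exact (F_norm_integral hK hy p).symm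
  rw [h1, ← integral_tsum_of_summable_integral_norm hint hsum]
  exact tsum_congr (F_integral hy)

lemma total_integral {K : ℝ} (hK : 0 ≤ K) :
    ∫ s in Set.Ioi (0:ℝ), Real.exp (-K - s) * besselI0 (2 * Real.sqrt (K * s)) = 1 := by
  have hpt : ∀ s ∈ Set.Ioi (0:ℝ), Real.exp (-K - s) * besselI0 (2 * Real.sqrt (K * s))
      = ∑' m : ℕ, cc K m * (s ^ m * Real.exp (-s)) := by
    intro s hs
    rw [Set.mem_Ioi] at hs
    rw [besselI0_two_sqrt (K * s) (mul_nonneg hK hs.le),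
      show -K - s = -K + -s by ring, Real.exp_add, mul_assoc, mul_comm (Real.exp (-s)), ← tsum_mul_right,
      ← tsum_mul_left]
    apply tsum_congr
    intro m
    unfold cc
    rw [mul_pow]
    ring
  have hint : ∀ m : ℕ, Integrable (fun s => cc K m * (s ^ m * Real.exp (-s)))
      (volume.restrict (Set.Ioi (0:ℝ))) := fun m => (integrable_pow_mul_exp_neg m).const_mul _
  have hnorm : ∀ m : ℕ, (∫ s in Set.Ioi (0:ℝ), ‖cc K m * (s ^ m * Real.exp (-s))‖)
      = Real.exp (-K) * (K ^ m / (Nat.factorial m : ℝ)) := by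
    intro m
    have h1 : ∀ s ∈ Set.Ioi (0:ℝ), ‖cc K m * (s ^ m * Real.exp (-s))‖
        = cc K m * (s ^ m * Real.exp (-s)) := by
      intro s hs
      rw [Set.mem_Ioi] at hs
      rw [Real.norm_of_nonneg]
      have := cc_nonneg hK m
      positivity
    rw [setIntegral_congr_fun measurableSet_Ioi h1, MeasureTheory.integral_const_mul _ _,
      integral_pow_mul_exp_neg m]
    unfold cc
    have hfne : ((Nat.factorial m : ℝ)) ≠ 0 := by positivity
    field_simp
  have hsum : Summable fun m : ℕ => ∫ s in Set.Ioi (0:ℝ), ‖cc K m * (s ^ m * Real.exp (-s))‖ := by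
    apply Summable.congr (((Real.summable_pow_div_factorial K).mul_left (Real.exp (-K))))
    intro m
    exact (hnorm m).symm
  rw [setIntegral_congr_fun measurableSet_Ioi hpt, ← integral_tsum_of_summable_integral_norm hint hsum]
  have : ∀ m : ℕ, (∫ s in Set.Ioi (0:ℝ), cc K m * (s ^ m * Real.exp (-s)))
      = Real.exp (-K) * (K ^ m / (Nat.factorial m : ℝ)) := by
    intro m
    rw [MeasureTheory.integral_const_mul _ _, integral_pow_mul_exp_neg m]
    unfold cc
    have hfne : ((Nat.factorial m : ℝ)) ≠ 0 := by positivity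
    field_simp
  rw [tsum_congr this, tsum_mul_left, ← exp_eq_tsum_real, ← Real.exp_add]
  simp

lemma g_integrableOn {K : ℝ} (hK : 0 ≤ K) :
    IntegrableOn (fun s => Real.exp (-K - s) * besselI0 (2 * Real.sqrt (K * s)))
      (Set.Ioi (0:ℝ)) := by
  have hmeas : Measurable (fun s : ℝ => Real.exp (-K - s) * besselI0 (2 * Real.sqrt (K * s))) := by
    apply Measurable.mul
    · fun_prop
    · exact besselI0_measurable.comp (by fun_prop)
  apply Integrable.mono' (g := fun s => Real.exp K * Real.exp (-(1/2) * s))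
  · exact (exp_neg_integrableOn_Ioi 0 (by norm_num)).const_mul _
  · exact hmeas.aestronglyMeasurable
  · rw [ae_restrict_iff' measurableSet_Ioi]
    apply Filter.Eventually.of_forall
    intro s hs
    rw [Set.mem_Ioi] at hs
    have hb0 := besselI0_nonneg (2 * Real.sqrt (K * s))
    rw [Real.norm_of_nonneg (by positivity)]
    have hbe : besselI0 (2 * Real.sqrt (K * s)) ≤ Real.exp (2 * Real.sqrt (K * s)) := by
      have := besselI0_le_exp (2 * Real.sqrt (K * s))
      rwa [abs_of_nonneg (by positivity)] at this
    calc Real.exp (-K - s) * besselI0 (2 * Real.sqrt (K * s))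
        ≤ Real.exp (-K - s) * Real.exp (2 * Real.sqrt (K * s)) :=
          mul_le_mul_of_nonneg_left hbe (by positivity)
      _ = Real.exp (-K - s + 2 * Real.sqrt (K * s)) := by rw [← Real.exp_add]
      _ ≤ Real.exp (K + -(1/2) * s) := by
          apply Real.exp_le_exp.mpr
          have h1 : Real.sqrt (K * s) = Real.sqrt K * Real.sqrt s := Real.sqrt_mul hK s
          have h2 : Real.sqrt K ^ 2 = K := Real.sq_sqrt hK
          have h3 : Real.sqrt s ^ 2 = s := Real.sq_sqrt hs.le
          nlinarith [sq_nonneg (2 * Real.sqrt K - Real.sqrt s)]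
      _ = Real.exp K * Real.exp (-(1/2) * s) := by rw [← Real.exp_add]

lemma key_lemma {K y : ℝ} (hK : 0 ≤ K) (hy : 0 ≤ y) :
    Summable (coefc K y) ∧
    marcumQ1 (Real.sqrt (2 * K)) (Real.sqrt (2 * y)) = 1 - ∑' n : ℕ, coefc K y n := by
  have hA : Summable (AA K y) := AA_summable hK hy
  obtain ⟨hs, heq⟩ := tsum_antidiagonal_reindex hA
  have hcoef : (fun n : ℕ => ∑ p ∈ Finset.HasAntidiagonal.antidiagonal n, AA K y p) = coefc K y :=
    funext (sum_antidiagonal_AA K y)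
  rw [hcoef] at hs heq
  refine ⟨hs, ?_⟩
  have hsplit : (∫ s in Set.Ioi (0:ℝ), Real.exp (-K - s) * besselI0 (2 * Real.sqrt (K * s)))
      = (∫ s in Set.Ioc 0 y, Real.exp (-K - s) * besselI0 (2 * Real.sqrt (K * s)))
      + (∫ s in Set.Ioi y, Real.exp (-K - s) * besselI0 (2 * Real.sqrt (K * s))) := by
    rw [← setIntegral_union (Set.Ioc_disjoint_Ioi le_rfl) measurableSet_Ioi
      ((g_integrableOn hK).mono_set Set.Ioc_subset_Ioi_self)
      ((g_integrableOn hK).mono_set (Set.Ioi_subset_Ioi hy)), Set.Ioc_union_Ioi_eq_Ioi hy]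
  rw [total_integral hK, partial_integral hK hy, heq] at hsplit
  unfold marcumQ1
  rw [marcum_change K y hK hy]
  linarith

/-- Series–Marcum Q identity used in the SIC proof. For `K ≥ 0`, `Ω > 0`,
`γ ≥ 0` and `x ≥ 0`,
`Q₁(√(2K), √(2(K+1)γ(1+x)/Ω)) = 1 − Σ_{n≥0} α(n,Ω,K,γ)(1+x)^{n+1}`,
with the series convergent. -/
theorem stmt19 (K Om γ x : ℝ) (hK : 0 ≤ K) (hOm : 0 < Om) (hγ : 0 ≤ γ) (hx : 0 ≤ x) :
    Summable (fun n : ℕ => alphaCoef n Om K γ * (1 + x) ^ (n + 1)) ∧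
    marcumQ1 (Real.sqrt (2 * K)) (Real.sqrt (2 * (K + 1) * γ * (1 + x) / Om)) =
      1 - ∑' n : ℕ, alphaCoef n Om K γ * (1 + x) ^ (n + 1) := by
  have hy : 0 ≤ (1 + K) * γ / Om * (1 + x) := by positivity
  have h1 : ∀ n : ℕ, alphaCoef n Om K γ * (1 + x) ^ (n + 1)
      = coefc K ((1 + K) * γ / Om * (1 + x)) n := by
    intro n
    unfold alphaCoef coefc
    rw [mul_pow]
    ring
  have h2 : Real.sqrt (2 * (K + 1) * γ * (1 + x) / Om)
      = Real.sqrt (2 * ((1 + K) * γ / Om * (1 + x))) := by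
    rw [show 2 * (K + 1) * γ * (1 + x) / Om = 2 * ((1 + K) * γ / Om * (1 + x)) by ring]
  obtain ⟨hs, he⟩ := key_lemma hK hy
  constructor
  · exact hs.congr (fun n => (h1 n).symm)
  · rw [h2, he, tsum_congr h1]
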